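/- arXiv:1306.6453 — 3 statements merged into one kernel-verified Lean document; each statement's English description precedes it below -/
import Mathlib

section
/- For every λ > 0, the operator L := Z₀² + B − λD₀ and the first-order operator V := Σ_{j=0}^{n−2} λ^{n−j} Z_j satisfy the eigenvector relation [L, V] = λV as operators on smooth functions on ℝⁿ. -/
noncomputable section

/-- Operators on functions on `ℝⁿ`. -/
abbrev OpM (n : ℕ) := ((Fin n → ℝ) → ℝ) → (Fin n → ℝ) → ℝ

/-- Commutator `[X,Y] = XY − YX` of operators. -/
def commOp {n : ℕ} (X Y : OpM n) : OpM n := fun f x => X (Y f) x - Y (X f) x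

/-- Partial derivative `∂_{i+1}` (`0`-based index `i`), extended by `0` out of range. -/
noncomputable def pdN (n : ℕ) (i : ℕ) : OpM n := fun f x =>
  if h : i < n then fderiv ℝ f x (Pi.single (⟨i, h⟩ : Fin n) 1) else 0

/-- The `(i+1)`-st coordinate (`0`-based index `i`), extended by `0` out of range. -/
def xc (n : ℕ) (x : Fin n → ℝ) (i : ℕ) : ℝ := if h : i < n then x ⟨i, h⟩ else 0

/-- The field `B = ∂₂ + x₁∂₃ + Σ_{j=3}^{n−1} x_j∂_{j+1}` (`1`-based indices). -/
noncomputable def BFil (n : ℕ) : OpM n := fun f x =>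
  pdN n 1 f x + xc n x 0 * pdN n 2 f x
    + ∑ j ∈ Finset.Icc 3 (n - 1), xc n x (j - 1) * pdN n j f x

/-- The fields `Z₀ = ∂₁`, `Z_{j+1} = [B, Z_j]`. -/
noncomputable def ZFil (n : ℕ) : ℕ → OpM n
  | 0 => pdN n 0
  | j + 1 => commOp (BFil n) (ZFil n j)

/-- The generator `L = Z₀² + B − λD₀` with partial dilation `D₀ = x₁∂₁`. -/
noncomputable def LFil (n : ℕ) (lam : ℝ) : OpM n := fun f x =>
  pdN n 0 (pdN n 0 f) x + BFil n f x - lam * (xc n x 0 * pdN n 0 f x)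

/-- The field `V = Σ_{j=0}^{n−2} λ^{n−j} Z_j`. -/
noncomputable def VFil (n : ℕ) (lam : ℝ) : OpM n := fun f x =>
  ∑ j ∈ Finset.range (n - 1), lam ^ (n - j) * ZFil n j f x

/-! Since `[x_k ∂_m, ∂_i] = -δ_{ik} ∂_m`, the brackets `Z_j` with `j ≥ 1` have constant
coefficients, `Z_j = (-1)^j ∂_{j+2}`, and `Z_{n-1} = 0`. Such fields commute with `Z₀²` and with
`D₀ = x₁∂₁`, while `[Z₀² - λD₀, Z₀] = λZ₀`; hence `[L, Z_j] = Z_{j+1} + δ_{j0} λ Z₀`. Against the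
weights `λ^{n-j}` the shift `Z_j ↦ Z_{j+1}` together with the extra `λ^{n+1} Z₀` is exactly
multiplication by `λ`. -/

open Finset
open scoped ContDiff

variable {n : ℕ}

section PartialDerivatives

lemma pdN_of_le {i : ℕ} (hi : n ≤ i) (f : (Fin n → ℝ) → ℝ) (x : Fin n → ℝ) :
    pdN n i f x = 0 := by
  simp [pdN, not_lt.mpr hi]

lemma pdN_const (i : ℕ) (c : ℝ) (x : Fin n → ℝ) : pdN n i (fun _ => c) x = 0 := by
  unfold pdN; split_ifs <;> simp

lemma pdN_add (i : ℕ) {f g : (Fin n → ℝ) → ℝ} {x : Fin n → ℝ}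
    (hf : DifferentiableAt ℝ f x) (hg : DifferentiableAt ℝ g x) :
    pdN n i (fun y => f y + g y) x = pdN n i f x + pdN n i g x := by
  unfold pdN; split_ifs <;> simp [fderiv_fun_add hf hg]

lemma pdN_mul (i : ℕ) {a g : (Fin n → ℝ) → ℝ} {x : Fin n → ℝ}
    (ha : DifferentiableAt ℝ a x) (hg : DifferentiableAt ℝ g x) :
    pdN n i (fun y => a y * g y) x = pdN n i a x * g x + a x * pdN n i g x := by
  unfold pdN
  split_ifs
  · simp only [fderiv_fun_mul ha hg, add_apply, smul_apply, smul_eq_mul]; ring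
  · ring

lemma pdN_xc {k : ℕ} (hk : k < n) (i : ℕ) (x : Fin n → ℝ) :
    pdN n i (fun y => xc n y k) x = if i = k then 1 else 0 := by
  have hxc : (fun y => xc n y k)
      = ContinuousLinearMap.proj (R := ℝ) (φ := fun _ : Fin n => ℝ) ⟨k, hk⟩ := by
    ext y; simp [xc, hk]
  unfold pdN
  split_ifs with hi hik hik <;> simp [hxc, Pi.single_apply, Fin.ext_iff, eq_comm] <;> omega

lemma pdN_comm {f : (Fin n → ℝ) → ℝ} (hf : ContDiff ℝ 2 f) (i j : ℕ) (x : Fin n → ℝ) :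
    pdN n i (pdN n j f) x = pdN n j (pdN n i f) x := by
  have hdf : Differentiable ℝ (fderiv ℝ f) :=
    (hf.fderiv_right (m := 1) (by norm_num)).differentiable one_ne_zero
  have hsymm : IsSymmSndFDerivAt ℝ f x :=
    hf.contDiffAt.isSymmSndFDerivAt (by simp [minSmoothness_of_isRCLikeNormedField])
  unfold pdN
  split_ifs with hi hj
  · have h := hsymm (Pi.single ⟨i, hi⟩ 1) (Pi.single ⟨j, hj⟩ 1)
    simp [fderiv_clm_apply (hdf x) (differentiableAt_const _), h]
  all_goals simp

end PartialDerivatives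

/-- Linearity is only asked on smooth functions: `pdN` is built from `fderiv`, whose junk value
`0` at non-differentiable points breaks additivity in general. -/
structure IsSmoothLinear (X : OpM n) : Prop where
  contDiff {f : (Fin n → ℝ) → ℝ} : ContDiff ℝ ∞ f → ContDiff ℝ ∞ (X f)
  map_add {f g : (Fin n → ℝ) → ℝ} : ContDiff ℝ ∞ f → ContDiff ℝ ∞ g →
    X (fun y => f y + g y) = fun x => X f x + X g x
  map_const_mul (c : ℝ) {f : (Fin n → ℝ) → ℝ} : ContDiff ℝ ∞ f →
    X (fun y => c * f y) = fun x => c * X f x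

namespace IsSmoothLinear

variable {X Y : OpM n}

lemma map_zero (hX : IsSmoothLinear X) : X (fun _ => 0) = fun _ => 0 := by
  simpa using hX.map_const_mul 0 (contDiff_const (c := (0 : ℝ)))

lemma map_sum {ι : Type*} (hX : IsSmoothLinear X) (s : Finset ι) {g : ι → (Fin n → ℝ) → ℝ}
    (hg : ∀ j ∈ s, ContDiff ℝ ∞ (g j)) :
    X (fun y => ∑ j ∈ s, g j y) = fun x => ∑ j ∈ s, X (g j) x := by
  classical
  induction s using Finset.induction_on with
  | empty => simpa using hX.map_zero
  | insert j s hj ih =>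
    simp only [sum_insert hj]
    have hs : ∀ k ∈ s, ContDiff ℝ ∞ (g k) := fun k hk => hg k (mem_insert_of_mem hk)
    rw [hX.map_add (hg j (mem_insert_self j s)) (ContDiff.sum hs), ih hs]

lemma add (hX : IsSmoothLinear X) (hY : IsSmoothLinear Y) :
    IsSmoothLinear fun f x => X f x + Y f x where
  contDiff hf := (hX.contDiff hf).add (hY.contDiff hf)
  map_add hf hg := by
    funext x; simp only [hX.map_add hf hg, hY.map_add hf hg]; ring
  map_const_mul c _ hf := by
    funext x; simp only [hX.map_const_mul c hf, hY.map_const_mul c hf]; ring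

lemma sub (hX : IsSmoothLinear X) (hY : IsSmoothLinear Y) :
    IsSmoothLinear fun f x => X f x - Y f x where
  contDiff hf := (hX.contDiff hf).sub (hY.contDiff hf)
  map_add hf hg := by
    funext x; simp only [hX.map_add hf hg, hY.map_add hf hg]; ring
  map_const_mul c _ hf := by
    funext x; simp only [hX.map_const_mul c hf, hY.map_const_mul c hf]; ring

lemma comp (hX : IsSmoothLinear X) (hY : IsSmoothLinear Y) : IsSmoothLinear fun f => X (Y f) where
  contDiff hf := hX.contDiff (hY.contDiff hf)
  map_add hf hg := by rw [hY.map_add hf hg, hX.map_add (hY.contDiff hf) (hY.contDiff hg)]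
  map_const_mul c _ hf := by rw [hY.map_const_mul c hf, hX.map_const_mul c (hY.contDiff hf)]

lemma mul_left (hX : IsSmoothLinear X) {a : (Fin n → ℝ) → ℝ} (ha : ContDiff ℝ ∞ a) :
    IsSmoothLinear fun f x => a x * X f x where
  contDiff hf := ha.mul (hX.contDiff hf)
  map_add hf hg := by
    funext x; simp only [hX.map_add hf hg]; ring
  map_const_mul c _ hf := by
    funext x; simp only [hX.map_const_mul c hf]; ring

lemma sum {ι : Type*} (s : Finset ι) {X : ι → OpM n} (hX : ∀ j ∈ s, IsSmoothLinear (X j)) :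
    IsSmoothLinear fun f x => ∑ j ∈ s, X j f x where
  contDiff hf := ContDiff.sum fun j hj => (hX j hj).contDiff hf
  map_add hf hg := by
    funext x
    rw [← sum_add_distrib]
    exact sum_congr rfl fun j hj => congrFun ((hX j hj).map_add hf hg) x
  map_const_mul c _ hf := by
    funext x
    rw [mul_sum]
    exact sum_congr rfl fun j hj => congrFun ((hX j hj).map_const_mul c hf) x

lemma commOp (hX : IsSmoothLinear X) (hY : IsSmoothLinear Y) : IsSmoothLinear (commOp X Y) :=
  (hX.comp hY).sub (hY.comp hX)

end IsSmoothLinear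

lemma contDiff_xc (k : ℕ) : ContDiff ℝ ∞ fun x : Fin n → ℝ => xc n x k := by
  unfold xc
  split_ifs with hk
  · exact contDiff_apply ℝ ℝ (⟨k, hk⟩ : Fin n)
  · exact contDiff_const

lemma isSmoothLinear_pdN (i : ℕ) : IsSmoothLinear (pdN n i) where
  contDiff hf := by
    unfold pdN
    split_ifs with hi
    · exact (hf.fderiv_right le_rfl).clm_apply contDiff_const
    · exact contDiff_const
  map_add hf hg := funext fun x =>
    pdN_add i (hf.differentiable (by simp) x) (hg.differentiable (by simp) x)
  map_const_mul c _ hf := funext fun x => by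
    rw [pdN_mul i (differentiableAt_const c) (hf.differentiable (by simp) x), pdN_const]; ring

lemma isSmoothLinear_BFil : IsSmoothLinear (BFil n) :=
  (((isSmoothLinear_pdN 1).add ((isSmoothLinear_pdN 2).mul_left (contDiff_xc 0))).add
    (IsSmoothLinear.sum _ fun j _ => (isSmoothLinear_pdN j).mul_left (contDiff_xc (j - 1))))

lemma isSmoothLinear_LFil (lam : ℝ) : IsSmoothLinear (LFil n lam) :=
  (((isSmoothLinear_pdN 0).comp (isSmoothLinear_pdN 0)).add isSmoothLinear_BFil).sub
    (((isSmoothLinear_pdN 0).mul_left (contDiff_xc 0)).mul_left contDiff_const)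

lemma isSmoothLinear_ZFil : ∀ j, IsSmoothLinear (ZFil n j)
  | 0 => isSmoothLinear_pdN 0
  | j + 1 => isSmoothLinear_BFil.commOp (isSmoothLinear_ZFil j)

section Commutators

variable {X Y Z : OpM n} {f : (Fin n → ℝ) → ℝ} {x : Fin n → ℝ}

lemma commOp_add_left (hZ : IsSmoothLinear Z) (hXf : ContDiff ℝ ∞ (X f))
    (hYf : ContDiff ℝ ∞ (Y f)) :
    commOp (fun g y => X g y + Y g y) Z f x = commOp X Z f x + commOp Y Z f x := by
  simp only [commOp, hZ.map_add hXf hYf]; ring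

lemma commOp_sub_left (hZ : IsSmoothLinear Z) (hXf : ContDiff ℝ ∞ (X f))
    (hYf : ContDiff ℝ ∞ (Y f)) :
    commOp (fun g y => X g y - Y g y) Z f x = commOp X Z f x - commOp Y Z f x := by
  have hsub : (fun y => X f y - Y f y) = fun y => X f y + (-1) * Y f y := by funext; ring
  simp only [commOp, hsub, hZ.map_add hXf (contDiff_const.mul hYf), hZ.map_const_mul _ hYf]; ring

lemma commOp_sum_left {ι : Type*} (s : Finset ι) {X : ι → OpM n} (hZ : IsSmoothLinear Z)
    (hXf : ∀ j ∈ s, ContDiff ℝ ∞ (X j f)) :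
    commOp (fun g y => ∑ j ∈ s, X j g y) Z f x = ∑ j ∈ s, commOp (X j) Z f x := by
  simp only [commOp, hZ.map_sum s hXf, sum_sub_distrib]

lemma commOp_sum_right {ι : Type*} (s : Finset ι) (c : ι → ℝ) {Y : ι → OpM n}
    (hX : IsSmoothLinear X) (hYf : ∀ j ∈ s, ContDiff ℝ ∞ (Y j f)) :
    commOp X (fun g y => ∑ j ∈ s, c j * Y j g y) f x = ∑ j ∈ s, c j * commOp X (Y j) f x := by
  simp only [commOp, hX.map_sum s fun j hj => contDiff_const.mul (hYf j hj), mul_sub,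
    sum_sub_distrib]
  congr 1
  exact sum_congr rfl fun j hj => congrFun (hX.map_const_mul _ (hYf j hj)) x

lemma commOp_mul_left_pdN (i : ℕ) {a : (Fin n → ℝ) → ℝ} (ha : DifferentiableAt ℝ a x)
    (hXf : DifferentiableAt ℝ (X f) x) :
    commOp (fun g y => a y * X g y) (pdN n i) f x
      = a x * commOp X (pdN n i) f x - pdN n i a x * X f x := by
  simp only [commOp, pdN_mul i ha hXf]; ring

lemma commOp_eq_const_mul_commOp_pdN (hX : IsSmoothLinear X) {c : ℝ} {i : ℕ}
    (hZ : ∀ g, ContDiff ℝ ∞ g → Z g = fun y => c * pdN n i g y) (hf : ContDiff ℝ ∞ f) :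
    commOp X Z f x = c * commOp X (pdN n i) f x := by
  simp only [commOp, hZ f hf, hZ (X f) (hX.contDiff hf),
    hX.map_const_mul c ((isSmoothLinear_pdN i).contDiff hf)]
  ring

lemma commOp_pdN_pdN (hf : ContDiff ℝ 2 f) (i m : ℕ) : commOp (pdN n m) (pdN n i) f x = 0 :=
  sub_eq_zero.mpr (pdN_comm hf m i x)

lemma commOp_xc_mul_pdN_pdN {k : ℕ} (hk : k < n) (hf : ContDiff ℝ ∞ f) (i m : ℕ) :
    commOp (fun g y => xc n y k * pdN n m g y) (pdN n i) f x
      = -(if i = k then pdN n m f x else 0) := by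
  rw [commOp_mul_left_pdN i ((contDiff_xc k).differentiable (by simp) x)
      (((isSmoothLinear_pdN m).contDiff hf).differentiable (by simp) x),
    commOp_pdN_pdN (hf.of_le ENat.LEInfty.out), pdN_xc hk]
  split_ifs <;> ring

end Commutators

section Filiform

variable {f : (Fin n → ℝ) → ℝ} {x : Fin n → ℝ}

lemma commOp_BFil_pdN (hn : 0 < n) (hf : ContDiff ℝ ∞ f) (i : ℕ) :
    commOp (BFil n) (pdN n i) f x
      = -((if i = 0 then pdN n 2 f x else 0)
          + ∑ j ∈ Icc 3 (n - 1), if i = j - 1 then pdN n j f x else 0) := by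
  have hP := isSmoothLinear_pdN (n := n)
  have hxcP (k m : ℕ) := (hP m).mul_left (contDiff_xc k)
  change commOp (fun g y => (pdN n 1 g y + xc n y 0 * pdN n 2 g y)
    + ∑ j ∈ Icc 3 (n - 1), xc n y (j - 1) * pdN n j g y) (pdN n i) f x = _
  rw [commOp_add_left (hP i) (((hP 1).add (hxcP 0 2)).contDiff hf)
      ((IsSmoothLinear.sum _ fun j _ => hxcP (j - 1) j).contDiff hf),
    commOp_add_left (hP i) ((hP 1).contDiff hf) ((hxcP 0 2).contDiff hf),
    commOp_sum_left _ (hP i) fun j _ => (hxcP (j - 1) j).contDiff hf,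
    commOp_pdN_pdN (hf.of_le ENat.LEInfty.out), commOp_xc_mul_pdN_pdN hn hf,
    sum_congr rfl fun j hj => commOp_xc_mul_pdN_pdN (by grind) hf i j,
    sum_neg_distrib]
  ring

lemma commOp_BFil_pdN_zero (hn : 0 < n) (hf : ContDiff ℝ ∞ f) :
    commOp (BFil n) (pdN n 0) f x = -pdN n 2 f x := by
  rw [commOp_BFil_pdN hn hf, sum_eq_zero fun j hj => if_neg (by grind)]
  simp

lemma commOp_BFil_pdN_of_two_le (hn : 0 < n) (hf : ContDiff ℝ ∞ f) {i : ℕ} (hi : 2 ≤ i) :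
    commOp (BFil n) (pdN n i) f x = -pdN n (i + 1) f x := by
  rw [commOp_BFil_pdN hn hf, if_neg (by omega),
    sum_congr rfl fun j hj => if_congr (by grind : i = j - 1 ↔ i + 1 = j)
      rfl rfl, sum_ite_eq]
  split_ifs with hmem
  · ring
  · rw [pdN_of_le (by grind)]; ring

lemma commOp_LFil_pdN (hn : 0 < n) (lam : ℝ) (hf : ContDiff ℝ ∞ f) (i : ℕ) :
    commOp (LFil n lam) (pdN n i) f x
      = commOp (BFil n) (pdN n i) f x + lam * (if i = 0 then pdN n 0 f x else 0) := by
  have hP := isSmoothLinear_pdN (n := n)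
  have hD := (hP 0).mul_left (contDiff_xc 0)
  change commOp (fun g y => (pdN n 0 (pdN n 0 g) y + BFil n g y)
    - lam * (xc n y 0 * pdN n 0 g y)) (pdN n i) f x = _
  have hsquare : commOp (fun g => pdN n 0 (pdN n 0 g)) (pdN n i) f x = 0 := by
    have hcomm := funext fun y => pdN_comm (hf.of_le ENat.LEInfty.out) i 0 y
    simp only [commOp]
    rw [pdN_comm (((hP 0).contDiff hf).of_le ENat.LEInfty.out) i 0, hcomm, sub_self]
  rw [commOp_sub_left (hP i) ((((hP 0).comp (hP 0)).add isSmoothLinear_BFil).contDiff hf)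
      ((hD.mul_left contDiff_const).contDiff hf),
    commOp_add_left (X := fun g => pdN n 0 (pdN n 0 g)) (hP i)
      (((hP 0).comp (hP 0)).contDiff hf) (isSmoothLinear_BFil.contDiff hf),
    hsquare, commOp_mul_left_pdN i (differentiableAt_const lam)
      ((hD.contDiff hf).differentiable (by simp) x),
    pdN_const, commOp_xc_mul_pdN_pdN hn hf]
  ring

lemma ZFil_succ_eq (hn : 0 < n) (j : ℕ) (hf : ContDiff ℝ ∞ f) :
    ZFil n (j + 1) f = fun x => (-1) ^ (j + 1) * pdN n (j + 2) f x := by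
  induction j generalizing f with
  | zero =>
    funext x
    change commOp (BFil n) (pdN n 0) f x = _
    rw [commOp_BFil_pdN_zero hn hf]
    ring
  | succ j ih =>
    funext x
    change commOp (BFil n) (ZFil n (j + 1)) f x = _
    rw [commOp_eq_const_mul_commOp_pdN isSmoothLinear_BFil (fun g hg => ih hg) hf,
      commOp_BFil_pdN_of_two_le hn hf (by omega)]
    ring

lemma ZFil_pred_eq_zero (hn : 2 ≤ n) (hf : ContDiff ℝ ∞ f) : ZFil n (n - 1) f x = 0 := by
  obtain ⟨m, rfl⟩ := Nat.exists_eq_add_of_le' hn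
  simp only [show m + 2 - 1 = m + 1 by omega, ZFil_succ_eq (by omega) m hf, pdN_of_le le_rfl,
    mul_zero]

lemma commOp_LFil_ZFil (hn : 0 < n) (lam : ℝ) (hf : ContDiff ℝ ∞ f) (j : ℕ) :
    commOp (LFil n lam) (ZFil n j) f x
      = ZFil n (j + 1) f x + if j = 0 then lam * ZFil n 0 f x else 0 := by
  cases j with
  | zero =>
    rw [if_pos rfl]
    exact commOp_LFil_pdN hn lam hf 0
  | succ j =>
    have hZ := fun g (hg : ContDiff ℝ ∞ g) => ZFil_succ_eq hn j hg
    change _ = commOp (BFil n) (ZFil n (j + 1)) f x + _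
    rw [commOp_eq_const_mul_commOp_pdN (isSmoothLinear_LFil lam) hZ hf,
      commOp_eq_const_mul_commOp_pdN isSmoothLinear_BFil hZ hf, commOp_LFil_pdN hn lam hf,
      if_neg (by omega), if_neg (by omega)]
    ring

end Filiform

lemma sum_range_pow_mul_shift {R : Type*} [CommSemiring R] (lam : R) (a : ℕ → R) {m N : ℕ}
    (hmN : m ≤ N) (ha : a m = 0) :
    ∑ j ∈ range m, lam ^ (N - j) * (a (j + 1) + if j = 0 then lam * a 0 else 0)
      = lam * ∑ j ∈ range m, lam ^ (N - j) * a j := by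
  cases m with
  | zero => simp
  | succ m =>
    calc ∑ j ∈ range (m + 1), lam ^ (N - j) * (a (j + 1) + if j = 0 then lam * a 0 else 0)
        = ∑ j ∈ range (m + 1), lam ^ (N + 1 - (j + 1)) * a (j + 1) + lam ^ (N + 1 - 0) * a 0 := by
          simp only [mul_add, mul_ite, mul_zero, sum_add_distrib, sum_ite_eq', mem_range,
            Nat.zero_lt_succ, if_true, Nat.add_sub_add_right, Nat.sub_zero, pow_succ]
          ring
      _ = ∑ j ∈ range (m + 2), lam ^ (N + 1 - j) * a j :=
          (sum_range_succ' (fun j => lam ^ (N + 1 - j) * a j) (m + 1)).symm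
      _ = lam * ∑ j ∈ range (m + 1), lam ^ (N - j) * a j := by
          rw [sum_range_succ, ha, mul_zero, add_zero, mul_sum]
          refine sum_congr rfl fun j hj => ?_
          rw [Nat.sub_add_comm (by grind), pow_succ]
          ring

theorem filiform_partial_dilation_eigenfield_general (n : ℕ)
    (lam : ℝ) :
    ∀ f : (Fin n → ℝ) → ℝ, ContDiff ℝ (⊤ : ℕ∞) f → ∀ x,
      commOp (LFil n lam) (VFil n lam) f x = lam * VFil n lam f x := by
  intro f hf x
  calc commOp (LFil n lam) (VFil n lam) f x
      = ∑ j ∈ range (n - 1), lam ^ (n - j) * commOp (LFil n lam) (ZFil n j) f x :=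
        commOp_sum_right _ _ (isSmoothLinear_LFil lam) fun j _ =>
          (isSmoothLinear_ZFil j).contDiff hf
    _ = lam * VFil n lam f x := by
      obtain hn | hn := lt_or_ge n 2
      · simp [VFil, Nat.sub_eq_zero_of_le (Nat.le_of_lt_succ hn)]
      simp only [commOp_LFil_ZFil (by omega) lam hf]
      exact sum_range_pow_mul_shift lam (ZFil n · f x) (by omega) (ZFil_pred_eq_zero hn hf)

/-- For every `λ > 0`, the eigenvector relation `[L, V] = λV` holds as an identity of
operators on smooth functions on `ℝⁿ`. -/
theorem filiform_partial_dilation_eigenfield (n : ℕ) (hn : 4 ≤ n)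
    (lam : ℝ) (hlam : 0 < lam) :
    ∀ f : (Fin n → ℝ) → ℝ, ContDiff ℝ (⊤ : ℕ∞) f → ∀ x,
      commOp (LFil n lam) (VFil n lam) f x = lam * VFil n lam f x :=
  filiform_partial_dilation_eigenfield_general n lam
end
end

section
/- For every λ, ξ > 0, setting κ := √(2λ/ξ) and V := κ∂_x + κ⁻¹∂_z, one has the eigenvector relation [V, L] = −λV as operators on smooth functions on ℝ³. -/
/-!
The coefficients of `Z₀`, `B` and `D₀` do not depend on `z`, so `∂_z` commutes with `L`, while
`[∂_x, Z₀] = 0`, `[∂_x, B] = -∂_z/2` and `[∂_x, D₀] = ∂_x` give `[∂_x, L] = -(ξ/2)∂_z - λ∂_x`.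
Hence `[V, L] = -λκ∂_x - (κξ/2)∂_z`, and this is `-λV` because `κ² = 2λ/ξ`.
-/

noncomputable section

/-- `ℝ³` with coordinates `(x, y, z) = (w 0, w 1, w 2)`. -/
abbrev Vec3 := Fin 3 → ℝ

/-- Partial derivative in the `i`-th coordinate direction. -/
noncomputable def pd3 (i : Fin 3) (f : Vec3 → ℝ) (w : Vec3) : ℝ :=
  fderiv ℝ f w (Pi.single i 1)

/-- The Heisenberg field `Z₀ = ∂_x + (y/2)∂_z`. -/
noncomputable def Zh0 (f : Vec3 → ℝ) (w : Vec3) : ℝ :=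
  pd3 0 f w + w 1 / 2 * pd3 2 f w

/-- The Heisenberg field `B = ∂_y − (x/2)∂_z`. -/
noncomputable def Bh (f : Vec3 → ℝ) (w : Vec3) : ℝ :=
  pd3 1 f w - w 0 / 2 * pd3 2 f w

/-- The partial dilation `D₀ = x∂_x`. -/
noncomputable def D0h (f : Vec3 → ℝ) (w : Vec3) : ℝ := w 0 * pd3 0 f w

/-- The generator `L = Z₀² + ξB − λD₀`. -/
noncomputable def Lh (ξ lam : ℝ) (f : Vec3 → ℝ) (w : Vec3) : ℝ :=
  Zh0 (Zh0 f) w + ξ * Bh f w - lam * D0h f w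

/-- The field `V = κ∂_x + κ⁻¹∂_z` with `κ = √(2λ/ξ)`. -/
noncomputable def Vh (ξ lam : ℝ) (f : Vec3 → ℝ) (w : Vec3) : ℝ :=
  Real.sqrt (2 * lam / ξ) * pd3 0 f w + (Real.sqrt (2 * lam / ξ))⁻¹ * pd3 2 f w

section PartialDerivatives

variable {f u v : Vec3 → ℝ} {i : Fin 3} {w : Vec3}

@[fun_prop]
lemma contDiff_pd3 (hf : ContDiff ℝ (⊤ : ℕ∞) f) (i : Fin 3) : ContDiff ℝ (⊤ : ℕ∞) (pd3 i f) :=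
  (contDiff_infty_iff_fderiv.mp hf).2.clm_apply contDiff_const

lemma pd3_add (hu : DifferentiableAt ℝ u w) (hv : DifferentiableAt ℝ v w) :
    pd3 i (fun w => u w + v w) w = pd3 i u w + pd3 i v w := by
  simp only [pd3, fderiv_fun_add hu hv, add_apply]

lemma pd3_sub (hu : DifferentiableAt ℝ u w) (hv : DifferentiableAt ℝ v w) :
    pd3 i (fun w => u w - v w) w = pd3 i u w - pd3 i v w := by
  simp only [pd3, fderiv_fun_sub hu hv, sub_apply]

lemma pd3_mul (hu : DifferentiableAt ℝ u w) (hv : DifferentiableAt ℝ v w) :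
    pd3 i (fun w => u w * v w) w = pd3 i u w * v w + u w * pd3 i v w := by
  simp only [pd3, fderiv_fun_mul hu hv, add_apply, smul_apply, smul_eq_mul]
  ring

lemma pd3_const_mul (c : ℝ) (hu : DifferentiableAt ℝ u w) :
    pd3 i (fun w => c * u w) w = c * pd3 i u w := by
  simp only [pd3, fderiv_const_mul hu, smul_apply, smul_eq_mul]

lemma pd3_div_const (c : ℝ) (hu : DifferentiableAt ℝ u w) :
    pd3 i (fun w => u w / c) w = pd3 i u w / c := by
  simpa only [div_eq_inv_mul] using pd3_const_mul c⁻¹ hu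

lemma pd3_coord (j : Fin 3) : pd3 i (fun w : Vec3 => w j) w = if j = i then 1 else 0 := by
  rw [pd3, fderiv_apply differentiableAt_id]
  simp [Pi.single_apply]

lemma pd3_comm (hf : ContDiff ℝ (⊤ : ℕ∞) f) (i j : Fin 3) :
    pd3 i (pd3 j f) w = pd3 j (pd3 i f) w := by
  have hsymm : IsSymmSndFDerivAt ℝ f w := hf.contDiffAt.isSymmSndFDerivAt
    (minSmoothness_of_isRCLikeNormedField.trans_le (WithTop.coe_le_coe.2 le_top))
  have hdiff : DifferentiableAt ℝ (fderiv ℝ f) w :=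
    ((contDiff_infty_iff_fderiv.mp hf).2.differentiable (by simp)) w
  have hsnd : ∀ k l : Fin 3, pd3 k (pd3 l f) w =
      fderiv ℝ (fderiv ℝ f) w (Pi.single k 1) (Pi.single l 1) := by
    intro k l
    change fderiv ℝ (fun y => fderiv ℝ f y (Pi.single l 1)) w (Pi.single k 1) = _
    rw [fderiv_clm_apply hdiff (differentiableAt_const _)]
    simp
  rw [hsnd, hsnd, hsymm]

@[fun_prop]
lemma differentiable_pd3 (hf : ContDiff ℝ (⊤ : ℕ∞) f) (i : Fin 3) : Differentiable ℝ (pd3 i f) :=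
  (contDiff_pd3 hf i).differentiable (by simp)

end PartialDerivatives

section HeisenbergFields

variable {f u v : Vec3 → ℝ} {w : Vec3}

@[fun_prop]
lemma contDiff_Zh0 (hf : ContDiff ℝ (⊤ : ℕ∞) f) : ContDiff ℝ (⊤ : ℕ∞) (Zh0 f) := by
  unfold Zh0; fun_prop

@[fun_prop]
lemma differentiable_Zh0 (hf : ContDiff ℝ (⊤ : ℕ∞) f) : Differentiable ℝ (Zh0 f) := by
  unfold Zh0; fun_prop

@[fun_prop]
lemma differentiable_Bh (hf : ContDiff ℝ (⊤ : ℕ∞) f) : Differentiable ℝ (Bh f) := by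
  unfold Bh; fun_prop

@[fun_prop]
lemma differentiable_D0h (hf : ContDiff ℝ (⊤ : ℕ∞) f) : Differentiable ℝ (D0h f) := by
  unfold D0h; fun_prop

lemma Zh0_linearComb (a b : ℝ) (hu : Differentiable ℝ u) (hv : Differentiable ℝ v) :
    Zh0 (fun w => a * u w + b * v w) = fun w => a * Zh0 u w + b * Zh0 v w := by
  funext w
  unfold Zh0
  simp (disch := fun_prop) only [pd3_add, pd3_const_mul]
  ring

lemma Bh_linearComb (a b : ℝ) (hu : Differentiable ℝ u) (hv : Differentiable ℝ v) :
    Bh (fun w => a * u w + b * v w) w = a * Bh u w + b * Bh v w := by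
  unfold Bh
  simp (disch := fun_prop) only [pd3_add, pd3_const_mul]
  ring

lemma D0h_linearComb (a b : ℝ) (hu : Differentiable ℝ u) (hv : Differentiable ℝ v) :
    D0h (fun w => a * u w + b * v w) w = a * D0h u w + b * D0h v w := by
  unfold D0h
  simp (disch := fun_prop) only [pd3_add, pd3_const_mul]
  ring

lemma Lh_linearComb (ξ lam a b : ℝ) (hu : ContDiff ℝ (⊤ : ℕ∞) u) (hv : ContDiff ℝ (⊤ : ℕ∞) v) :
    Lh ξ lam (fun w => a * u w + b * v w) w = a * Lh ξ lam u w + b * Lh ξ lam v w := by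
  have hdiff : ∀ {g : Vec3 → ℝ}, ContDiff ℝ (⊤ : ℕ∞) g → Differentiable ℝ g :=
    fun hg => hg.differentiable (by simp)
  simp only [Lh, Zh0_linearComb a b (hdiff hu) (hdiff hv),
    Zh0_linearComb a b (hdiff (contDiff_Zh0 hu)) (hdiff (contDiff_Zh0 hv)),
    Bh_linearComb a b (hdiff hu) (hdiff hv), D0h_linearComb a b (hdiff hu) (hdiff hv)]
  ring

lemma pd3_zero_Zh0 (hf : ContDiff ℝ (⊤ : ℕ∞) f) : pd3 0 (Zh0 f) = Zh0 (pd3 0 f) := by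
  funext w
  unfold Zh0
  simp (disch := fun_prop) only [pd3_add, pd3_mul, pd3_div_const, pd3_coord, pd3_comm hf 0 2]
  simp

lemma pd3_two_Zh0 (hf : ContDiff ℝ (⊤ : ℕ∞) f) : pd3 2 (Zh0 f) = Zh0 (pd3 2 f) := by
  funext w
  unfold Zh0
  simp (disch := fun_prop) only [pd3_add, pd3_mul, pd3_div_const, pd3_coord, pd3_comm hf 2 0]
  simp

lemma pd3_zero_Bh (hf : ContDiff ℝ (⊤ : ℕ∞) f) :
    pd3 0 (Bh f) w = Bh (pd3 0 f) w - pd3 2 f w / 2 := by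
  unfold Bh
  simp (disch := fun_prop) only [pd3_sub, pd3_mul, pd3_div_const, pd3_coord, pd3_comm hf 0 1,
    pd3_comm hf 0 2]
  simp only [Fin.isValue, ↓reduceIte]
  ring

lemma pd3_two_Bh (hf : ContDiff ℝ (⊤ : ℕ∞) f) : pd3 2 (Bh f) w = Bh (pd3 2 f) w := by
  unfold Bh
  simp (disch := fun_prop) only [pd3_sub, pd3_mul, pd3_div_const, pd3_coord, pd3_comm hf 2 1]
  simp

lemma pd3_zero_D0h (hf : ContDiff ℝ (⊤ : ℕ∞) f) :
    pd3 0 (D0h f) w = D0h (pd3 0 f) w + pd3 0 f w := by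
  unfold D0h
  simp (disch := fun_prop) only [pd3_mul, pd3_coord]
  simp only [Fin.isValue, ↓reduceIte]
  ring

lemma pd3_two_D0h (hf : ContDiff ℝ (⊤ : ℕ∞) f) : pd3 2 (D0h f) w = D0h (pd3 2 f) w := by
  unfold D0h
  simp (disch := fun_prop) only [pd3_mul, pd3_coord, pd3_comm hf 2 0]
  simp

lemma pd3_zero_Lh (ξ lam : ℝ) (hf : ContDiff ℝ (⊤ : ℕ∞) f) :
    pd3 0 (Lh ξ lam f) w = Lh ξ lam (pd3 0 f) w - ξ / 2 * pd3 2 f w - lam * pd3 0 f w := by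
  unfold Lh
  simp (disch := fun_prop) only [pd3_sub, pd3_add, pd3_const_mul, pd3_zero_Zh0 hf,
    pd3_zero_Zh0 (contDiff_Zh0 hf), pd3_zero_Bh hf, pd3_zero_D0h hf]
  ring

lemma pd3_two_Lh (ξ lam : ℝ) (hf : ContDiff ℝ (⊤ : ℕ∞) f) :
    pd3 2 (Lh ξ lam f) w = Lh ξ lam (pd3 2 f) w := by
  unfold Lh
  simp (disch := fun_prop) only [pd3_sub, pd3_add, pd3_const_mul, pd3_two_Zh0 hf,
    pd3_two_Zh0 (contDiff_Zh0 hf), pd3_two_Bh hf, pd3_two_D0h hf]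

end HeisenbergFields

/-- For every `λ, ξ > 0`, the eigenvector relation `[V, L] = −λV` holds as an identity
of operators on smooth functions on `ℝ³`. -/
theorem heisenberg_eigenfield (ξ lam : ℝ) (hξ : 0 < ξ) (hlam : 0 < lam) :
    ∀ f : Vec3 → ℝ, ContDiff ℝ (⊤ : ℕ∞) f → ∀ w : Vec3,
      Vh ξ lam (Lh ξ lam f) w - Lh ξ lam (Vh ξ lam f) w = -lam * Vh ξ lam f w := by
  intro f hf w
  set κ := Real.sqrt (2 * lam / ξ)
  have hκ : κ * ξ / 2 = lam * κ⁻¹ := by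
    have hκ0 : κ ≠ 0 := by positivity
    have hκsq : κ ^ 2 = 2 * lam / ξ := Real.sq_sqrt (by positivity)
    field_simp
    rw [hκsq]
    field_simp
  have hLV : Lh ξ lam (Vh ξ lam f) w = κ * Lh ξ lam (pd3 0 f) w + κ⁻¹ * Lh ξ lam (pd3 2 f) w :=
    Lh_linearComb ξ lam κ κ⁻¹ (contDiff_pd3 hf 0) (contDiff_pd3 hf 2)
  rw [hLV, Vh, Vh, pd3_zero_Lh ξ lam hf, pd3_two_Lh ξ lam hf]
  linear_combination -pd3 2 f w * hκ
end
end

section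
/- Let λ, ξ > 0, κ := √(2λ/ξ) and V := κ∂_x + κ⁻¹∂_z. If f : (0,∞) × ℝ³ → ℝ is smooth and satisfies ∂_t f(t,·) = L f(t,·), then pointwise on (0,∞) × ℝ³: ∂_t(e^{2λt}(Vf)²) − L(e^{2λt}(Vf)²) = −2e^{2λt}(Z₀Vf)² ≤ 0. (This is the pointwise form of the exponential concentration estimate (Vf_t)² ≤ e^{−2λt}P_t((Vf₀)²).) -/
noncomputable section

/-!
Write `L = Z₀² + Y` with drift `Y = ξB − λD₀`, and `V` as the constant vector field
`κ e₀ + κ⁻¹ e₂`. The coefficients of `Z₀` do not depend on `x` or `z`, so `V` commutes with `Z₀`,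
while `[V, Y] = −(ξκ/2) ∂_z − λκ ∂_x = −λV` because `ξκ² = 2λ`; hence `VL = LV − λV`.
Differentiating the equation in space (mixed partials commute) gives `∂_t Vf = VLf = LVf − λVf`.
Since `Y` is a derivation, `L(g²) = 2g Lg + 2(Z₀g)²`, and the terms `2λ(Vf)²` and
`2Vf·(LVf − λVf) − 2Vf·LVf` cancel, leaving `−2e^{2λt}(Z₀Vf)²`.
-/

open scoped ContDiff

section DerivAlong

variable {E : Type*} [NormedAddCommGroup E] [NormedSpace ℝ E]

def derivAlong (X : E → E) (g : E → ℝ) (w : E) : ℝ := fderiv ℝ g w (X w)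

def hormanderOp (X Y : E → E) (g : E → ℝ) (w : E) : ℝ :=
  derivAlong X (derivAlong X g) w + derivAlong Y g w

variable {X Y : E → E} {g h : E → ℝ} {w : E}

theorem contDiff_derivAlong (hg : ContDiff ℝ ∞ g) (hX : ContDiff ℝ ∞ X) :
    ContDiff ℝ ∞ (derivAlong X g) :=
  (hg.fderiv_right le_rfl).clm_apply hX

theorem differentiable_derivAlong (hg : ContDiff ℝ 2 g) (hX : Differentiable ℝ X) :
    Differentiable ℝ (derivAlong X g) :=
  ((hg.fderiv_right (m := 1) le_rfl).differentiable one_ne_zero).clm_apply hX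

theorem derivAlong_add (hg : DifferentiableAt ℝ g w) (hh : DifferentiableAt ℝ h w) :
    derivAlong X (fun y => g y + h y) w = derivAlong X g w + derivAlong X h w := by
  simp [derivAlong, fderiv_fun_add hg hh]

theorem derivAlong_mul (hg : DifferentiableAt ℝ g w) (hh : DifferentiableAt ℝ h w) :
    derivAlong X (fun y => g y * h y) w = derivAlong X g w * h w + g w * derivAlong X h w := by
  simp only [derivAlong, fderiv_fun_mul hg hh, add_apply, smul_apply, smul_eq_mul]
  ring

theorem derivAlong_const_mul (hg : DifferentiableAt ℝ g w) (c : ℝ) :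
    derivAlong X (fun y => c * g y) w = c * derivAlong X g w := by
  simp [derivAlong, fderiv_const_mul hg c]

/-- The correction term is the Lie bracket `[v, Y] = DY · v`. -/
theorem derivAlong_const_derivAlong (hg : ContDiffAt ℝ 2 g w) (hY : DifferentiableAt ℝ Y w)
    (v : E) :
    derivAlong (fun _ => v) (derivAlong Y g) w
      = derivAlong Y (derivAlong (fun _ => v) g) w + fderiv ℝ g w (fderiv ℝ Y w v) := by
  have := VectorField.fderiv_apply_lieBracket hg (by simp) hY (differentiableAt_const v)
  simp only [VectorField.lieBracket, fderiv_const_apply, zero_apply, sub_zero] at this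
  unfold derivAlong
  linarith

theorem hormanderOp_const_mul (hg : ContDiff ℝ 2 g) (hX : Differentiable ℝ X) (c : ℝ) :
    hormanderOp X Y (fun y => c * g y) w = c * hormanderOp X Y g w := by
  have hXg : derivAlong X (fun y => c * g y) = fun y => c * derivAlong X g y :=
    funext fun y => derivAlong_const_mul (hg.differentiable two_ne_zero y) c
  rw [hormanderOp, hXg, derivAlong_const_mul (differentiable_derivAlong hg hX w),
    derivAlong_const_mul (hg.differentiable two_ne_zero w), hormanderOp]
  ring

/-- The drift `Y` is a derivation, so only `X²` contributes to the carré du champ `(Xg)²`. -/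
theorem hormanderOp_sq (hg : ContDiff ℝ 2 g) (hX : Differentiable ℝ X) :
    hormanderOp X Y (fun y => g y ^ 2) w
      = 2 * g w * hormanderOp X Y g w + 2 * derivAlong X g w ^ 2 := by
  have hgd := hg.differentiable two_ne_zero
  have hXgd := differentiable_derivAlong hg hX
  have hsq : ∀ {Z : E → E} y, derivAlong Z (fun y => g y ^ 2) y = 2 * (g y * derivAlong Z g y) :=
    fun y => by
      simp only [derivAlong, fderiv_fun_pow 2 (hgd y), smul_apply, smul_eq_mul]
      ring
  have hXsq : derivAlong X (fun y => g y ^ 2) = fun y => 2 * (g y * derivAlong X g y) :=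
    funext hsq
  rw [hormanderOp, hXsq, hsq,
    derivAlong_const_mul (g := fun y => g y * derivAlong X g y) ((hgd w).mul (hXgd w)),
    derivAlong_mul (hgd w) (hXgd w), hormanderOp]
  ring

theorem derivAlong_const_hormanderOp (hg : ContDiff ℝ ∞ g) (hX : ContDiff ℝ ∞ X)
    (hY : Differentiable ℝ Y) {v : E} (hXv : ∀ y, fderiv ℝ X y v = 0) :
    derivAlong (fun _ => v) (hormanderOp X Y g) w
      = hormanderOp X Y (derivAlong (fun _ => v) g) w + fderiv ℝ g w (fderiv ℝ Y w v) := by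
  have hg2 : ContDiff ℝ 2 g := hg.of_le ENat.LEInfty.out
  have hXd : Differentiable ℝ X := hX.differentiable (by simp)
  have hvX : derivAlong (fun _ => v) (derivAlong X g) = derivAlong X (derivAlong (fun _ => v) g) :=
    funext fun y => by
      rw [derivAlong_const_derivAlong hg2.contDiffAt (hXd y), hXv, map_zero, add_zero]
  have hXXg : ContDiff ℝ 2 (derivAlong X g) := (contDiff_derivAlong hg hX).of_le ENat.LEInfty.out
  have hL : hormanderOp X Y g = fun y => derivAlong X (derivAlong X g) y + derivAlong Y g y := rfl
  rw [hL, derivAlong_add (differentiable_derivAlong hXXg hXd w)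
      (differentiable_derivAlong hg2 hY w),
    derivAlong_const_derivAlong hXXg.contDiffAt (hXd w), hXv, map_zero, add_zero, hvX,
    derivAlong_const_derivAlong hg2.contDiffAt (hY w), hormanderOp]
  ring

theorem hasDerivAt_fderiv_apply_of_contDiffAt {f : ℝ → E → ℝ} {t : ℝ}
    (hf : ContDiffAt ℝ 2 (fun p : ℝ × E => f p.1 p.2) (t, w)) (v : E) :
    HasDerivAt (fun s => fderiv ℝ (f s) w v)
      (fderiv ℝ (fun y => deriv (fun s => f s y) t) w v) t := by
  set F : ℝ × E → ℝ := fun p => f p.1 p.2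
  have hFd : ∀ᶠ q in nhds (t, w), HasFDerivAt F (fderiv ℝ F q) q :=
    (hf.eventually (by simp)).mono fun q hq => (hq.differentiableAt (by simp)).hasFDerivAt
  have hG : DifferentiableAt ℝ (fderiv ℝ F) (t, w) :=
    (hf.fderiv_right (m := 1) le_rfl).differentiableAt one_ne_zero
  have hsymm := second_derivative_symmetric_of_eventually hFd hG.hasFDerivAt (1, 0) (0, v)
  have hslice : (fun s => fderiv ℝ (f s) w v) =ᶠ[nhds t] fun s => fderiv ℝ F (s, w) (0, v) := by
    filter_upwards [((continuous_id.prodMk continuous_const).tendsto t).eventually hFd]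
      with s hs
    have hcomp : HasFDerivAt (f s) ((fderiv ℝ F (s, w)).comp (.inr ℝ ℝ E)) w :=
      hs.comp w ((hasFDerivAt_const s w).prodMk (hasFDerivAt_id w))
    rw [hcomp.fderiv]
    rfl
  have htime : (fun y => deriv (fun s => f s y) t) =ᶠ[nhds w]
      fun y => fderiv ℝ F (t, y) (1, 0) := by
    filter_upwards [((continuous_const.prodMk continuous_id).tendsto w).eventually hFd]
      with y hy
    exact (hy.comp_hasDerivAt t ((hasDerivAt_id t).prodMk (hasDerivAt_const t y))).deriv
  have hG_time : HasDerivAt (fun s => fderiv ℝ F (s, w) (0, v))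
      (fderiv ℝ (fderiv ℝ F) (t, w) (1, 0) (0, v)) t := by
    have := hG.hasFDerivAt.comp_hasDerivAt t ((hasDerivAt_id t).prodMk (hasDerivAt_const t w))
    simpa using this.clm_apply (hasDerivAt_const t ((0 : ℝ), v))
  have hG_space := (hG.hasFDerivAt.comp w ((hasFDerivAt_const t w).prodMk
    (hasFDerivAt_id w))).clm_apply (hasFDerivAt_const ((1 : ℝ), (0 : E)) w)
  rw [htime.fderiv_eq, HasFDerivAt.fderiv (f := fun y => fderiv ℝ F (t, y) (1, 0)) hG_space]
  refine (hG_time.congr_of_eventuallyEq hslice).congr_deriv ?_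
  rw [hsymm]
  simp

theorem contDiff_of_contDiffAt_uncurry {n : WithTop ℕ∞} {f : ℝ → E → ℝ} {t : ℝ}
    (hf : ∀ y, ContDiffAt ℝ n (fun p : ℝ × E => f p.1 p.2) (t, y)) : ContDiff ℝ n (f t) :=
  contDiff_iff_contDiffAt.2 fun y => (hf y).comp y (contDiffAt_const.prodMk contDiffAt_id)

end DerivAlong

section Heisenberg

theorem fderiv_apply_apply {ι : Type*} [Fintype ι] (i : ι) (w v : ι → ℝ) :
    fderiv ℝ (fun y : ι → ℝ => y i) w v = v i := by
  rw [(hasFDerivAt_apply i w).fderiv]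
  rfl

def z0Field (w : Vec3) : Vec3 := Pi.single 0 1 + (w 1 / 2) • Pi.single 2 1

def bField (w : Vec3) : Vec3 := Pi.single 1 1 - (w 0 / 2) • Pi.single 2 1

def d0Field (w : Vec3) : Vec3 := w 0 • Pi.single 0 1

def driftField (ξ lam : ℝ) (w : Vec3) : Vec3 := ξ • bField w - lam • d0Field w

def vVec (ξ lam : ℝ) : Vec3 :=
  Real.sqrt (2 * lam / ξ) • Pi.single 0 1 + (Real.sqrt (2 * lam / ξ))⁻¹ • Pi.single 2 1

theorem Zh0_eq_derivAlong : Zh0 = derivAlong z0Field := by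
  ext g w
  simp [Zh0, pd3, derivAlong, z0Field]

theorem Vh_eq_derivAlong (ξ lam : ℝ) : Vh ξ lam = derivAlong (fun _ => vVec ξ lam) := by
  ext g w
  simp [Vh, pd3, derivAlong, vVec]

theorem Lh_eq_hormanderOp (ξ lam : ℝ) : Lh ξ lam = hormanderOp z0Field (driftField ξ lam) := by
  ext g w
  simp only [Lh, Bh, D0h, pd3, hormanderOp, Zh0_eq_derivAlong, derivAlong, driftField, bField,
    d0Field, map_sub, map_smul, smul_eq_mul]
  ring

theorem contDiff_z0Field : ContDiff ℝ ∞ z0Field := by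
  unfold z0Field
  fun_prop

theorem differentiable_driftField (ξ lam : ℝ) : Differentiable ℝ (driftField ξ lam) := by
  unfold driftField bField d0Field
  fun_prop

theorem fderiv_z0Field_apply (w v : Vec3) : fderiv ℝ z0Field w v = (v 1 / 2) • Pi.single 2 1 := by
  unfold z0Field
  simp (disch := fun_prop) [fderiv_smul_const, div_eq_inv_mul, fderiv_const_mul,
    fderiv_apply_apply]

theorem fderiv_driftField_apply (ξ lam : ℝ) (w v : Vec3) :
    fderiv ℝ (driftField ξ lam) w v
      = ξ • (-(v 0 / 2) • Pi.single 2 1) - lam • v 0 • Pi.single 0 1 := by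
  unfold driftField bField d0Field
  simp (disch := fun_prop) [fderiv_smul_const, div_eq_inv_mul, fderiv_const_mul,
    fderiv_apply_apply, fderiv_fun_sub, fderiv_fun_const_smul]

theorem vVec_zero (ξ lam : ℝ) : vVec ξ lam 0 = Real.sqrt (2 * lam / ξ) := by
  simp [vVec]

theorem vVec_one (ξ lam : ℝ) : vVec ξ lam 1 = 0 := by
  simp [vVec]

theorem fderiv_z0Field_vVec (ξ lam : ℝ) (w : Vec3) : fderiv ℝ z0Field w (vVec ξ lam) = 0 := by
  simp [fderiv_z0Field_apply, vVec_one]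

theorem fderiv_driftField_vVec {ξ lam : ℝ} (hξ : 0 < ξ) (hlam : 0 < lam) (w : Vec3) :
    fderiv ℝ (driftField ξ lam) w (vVec ξ lam) = -lam • vVec ξ lam := by
  rw [fderiv_driftField_apply, vVec_zero, vVec]
  set κ := Real.sqrt (2 * lam / ξ)
  have hκ2 : ξ * κ ^ 2 = 2 * lam := by
    rw [Real.sq_sqrt (by positivity)]
    field_simp
  have hκ : ξ * (κ / 2) = lam * κ⁻¹ := by
    have hκ0 : κ ≠ 0 := by positivity
    field_simp
    linear_combination hκ2
  linear_combination (norm := module) (-hκ) • (Pi.single 2 1 : Vec3)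

theorem Vh_Lh {ξ lam : ℝ} (hξ : 0 < ξ) (hlam : 0 < lam) {g : Vec3 → ℝ}
    (hg : ContDiff ℝ ∞ g) (w : Vec3) :
    Vh ξ lam (Lh ξ lam g) w = Lh ξ lam (Vh ξ lam g) w - lam * Vh ξ lam g w := by
  rw [Vh_eq_derivAlong, Lh_eq_hormanderOp, derivAlong_const_hormanderOp hg contDiff_z0Field
    (differentiable_driftField ξ lam) (fderiv_z0Field_vVec ξ lam),
    fderiv_driftField_vVec hξ hlam, map_smul, smul_eq_mul, neg_mul, ← sub_eq_add_neg]
  rfl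

end Heisenberg

/-- Exponential concentration in pointwise form: along any smooth solution of
`∂_t f = Lf` on `(0,∞) × ℝ³` one has
`∂_t(e^{2λt}(Vf)²) − L(e^{2λt}(Vf)²) = −2e^{2λt}(Z₀Vf)² ≤ 0`. -/
theorem heisenberg_concentration (ξ lam : ℝ) (hξ : 0 < ξ) (hlam : 0 < lam)
    (f : ℝ → Vec3 → ℝ)
    (hf : ContDiffOn ℝ (⊤ : ℕ∞) (fun p : ℝ × Vec3 => f p.1 p.2)
      (Set.Ioi (0 : ℝ) ×ˢ (Set.univ : Set Vec3)))
    (heq : ∀ t : ℝ, 0 < t → ∀ w : Vec3, deriv (fun s => f s w) t = Lh ξ lam (f t) w) :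
    ∀ t : ℝ, 0 < t → ∀ w : Vec3,
      (deriv (fun s => Real.exp (2 * lam * s) * (Vh ξ lam (f s) w) ^ 2) t
          - Lh ξ lam (fun y => Real.exp (2 * lam * t) * (Vh ξ lam (f t) y) ^ 2) w
        = -2 * Real.exp (2 * lam * t) * (Zh0 (Vh ξ lam (f t)) w) ^ 2) ∧
      deriv (fun s => Real.exp (2 * lam * s) * (Vh ξ lam (f s) w) ^ 2) t
          - Lh ξ lam (fun y => Real.exp (2 * lam * t) * (Vh ξ lam (f t) y) ^ 2) w
        ≤ 0 := by
  intro t ht w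
  have hF : ∀ y, ContDiffAt ℝ ∞ (fun p : ℝ × Vec3 => f p.1 p.2) (t, y) := fun y =>
    hf.contDiffAt (prod_mem_nhds (Ioi_mem_nhds ht) Filter.univ_mem)
  have hft : ContDiff ℝ ∞ (f t) := contDiff_of_contDiffAt_uncurry hF
  have hVft : ContDiff ℝ 2 (Vh ξ lam (f t)) := by
    rw [Vh_eq_derivAlong]
    exact (contDiff_derivAlong hft contDiff_const).of_le ENat.LEInfty.out
  have hV : HasDerivAt (fun s => Vh ξ lam (f s) w) (Vh ξ lam (Lh ξ lam (f t)) w) t := by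
    rw [← funext (heq t ht), Vh_eq_derivAlong]
    exact hasDerivAt_fderiv_apply_of_contDiffAt ((hF w).of_le ENat.LEInfty.out) (vVec ξ lam)
  have hexp : HasDerivAt (fun s => Real.exp (2 * lam * s)) (Real.exp (2 * lam * t) * (2 * lam)) t :=
    ((hasDerivAt_id t).const_mul (2 * lam)).exp.congr_deriv (by simp)
  have key : deriv (fun s => Real.exp (2 * lam * s) * (Vh ξ lam (f s) w) ^ 2) t
      - Lh ξ lam (fun y => Real.exp (2 * lam * t) * (Vh ξ lam (f t) y) ^ 2) w
      = -2 * Real.exp (2 * lam * t) * (Zh0 (Vh ξ lam (f t)) w) ^ 2 := by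
    have hZ : Differentiable ℝ z0Field := contDiff_z0Field.differentiable (by simp)
    rw [(hexp.fun_mul (hV.fun_pow 2)).deriv, Vh_Lh hξ hlam hft, Lh_eq_hormanderOp,
      hormanderOp_const_mul (hVft.pow 2) hZ, hormanderOp_sq hVft hZ, ← Lh_eq_hormanderOp,
      Zh0_eq_derivAlong]
    push_cast
    ring
  refine ⟨key, key ▸ ?_⟩
  have := Real.exp_pos (2 * lam * t)
  nlinarith [sq_nonneg (Zh0 (Vh ξ lam (f t)) w)]
end
end
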